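/- Let n > 100 and m < n be positive integers with φ(P_n) = P_m. Then the smallest prime factor q_1 of P_n satisfies q_1 < 3·ω(P_n), where ω(P_n) is the number of distinct prime factors of P_n. -/
import Mathlib


/-- The Pell sequence: `P 0 = 0`, `P 1 = 1`, `P (n+2) = 2 * P (n+1) + P n`. -/
def pell : ℕ → ℕ
  | 0 => 0
  | 1 => 1
  | n + 2 => 2 * pell (n + 1) + pell n

lemma pell_pos : ∀ n, 0 < n → 0 < pell n
  | 1, _ => by simp [pell]
  | n + 2, _ => by
      have := pell_pos (n + 1) (by omega)
      simp only [pell]; omega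

lemma pell_le_succ (k : ℕ) : pell k ≤ pell (k + 1) := by
  match k with
  | 0 => simp [pell]
  | j + 1 =>
    have := pell_pos (j + 1) (by omega)
    show pell (j+1) ≤ 2 * pell (j + 1) + pell j
    omega

lemma pell_mono : Monotone pell := monotone_nat_of_le_succ pell_le_succ

/-- If `n > 100`, `0 < m < n` and `φ(P n) = P m`, then the smallest prime
factor of `P n` is less than `3 * ω(P n)`. -/
theorem minFac_pell_lt (n m : ℕ) (hn : 100 < n) (hm : 0 < m) (hmn : m < n)
    (h : Nat.totient (pell n) = pell m) :
    (pell n).minFac < 3 * (pell n).primeFactors.card := by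
  by_contra hcon
  push_neg at hcon
  set N := pell n with hNdef
  have hN2 : 2 ≤ N := by
    have : pell 2 ≤ pell n := pell_mono (by omega)
    simpa [pell] using this
  have hN1 : N ≠ 1 := by omega
  have hminp : N.minFac.Prime := Nat.minFac_prime hN1
  have hmem : N.minFac ∈ N.primeFactors :=
    Nat.mem_primeFactors.mpr ⟨hminp, N.minFac_dvd, by omega⟩
  set k := N.primeFactors.card with hkdef
  have hk1 : 1 ≤ k := Finset.card_pos.mpr ⟨_, hmem⟩
  have hkQ : (0:ℚ) < 3 * k := by positivity
  -- each prime factor is at least 3k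
  have hge : ∀ p ∈ N.primeFactors, (1 - (3 * (k:ℚ))⁻¹) ≤ 1 - (p:ℚ)⁻¹ := by
    intro p hp
    have hpp := Nat.prime_of_mem_primeFactors hp
    have hple : N.minFac ≤ p :=
      Nat.minFac_le_of_dvd hpp.two_le (Nat.dvd_of_mem_primeFactors hp)
    have h3k : 3 * k ≤ p := le_trans hcon hple
    have hppos : (0:ℚ) < p := by exact_mod_cast hpp.pos
    have : (p:ℚ)⁻¹ ≤ (3 * (k:ℚ))⁻¹ := by
      apply inv_anti₀ hkQ
      exact_mod_cast h3k
    linarith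
  have hfrac : (2/3 : ℚ) ≤ ∏ p ∈ N.primeFactors, (1 - (p:ℚ)⁻¹) := by
    have hle1 : (3 * (k:ℚ))⁻¹ ≤ 1 := by
      rw [inv_le_one_iff₀]; right; exact_mod_cast by omega
    have hb : (1 - (3 * (k:ℚ))⁻¹) ^ k ≤ ∏ p ∈ N.primeFactors, (1 - (p:ℚ)⁻¹) := by
      calc (1 - (3 * (k:ℚ))⁻¹) ^ k
          = ∏ _p ∈ N.primeFactors, (1 - (3 * (k:ℚ))⁻¹) := by
            rw [Finset.prod_const, hkdef]
        _ ≤ ∏ p ∈ N.primeFactors, (1 - (p:ℚ)⁻¹) :=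
            Finset.prod_le_prod (fun p hp => by linarith) hge
    have hbern : (2/3 : ℚ) ≤ (1 - (3 * (k:ℚ))⁻¹) ^ k := by
      have hbp := one_add_mul_le_pow (a := -(3 * (k:ℚ))⁻¹) (by linarith) k
      rw [← sub_eq_add_neg] at hbp
      have hkne : (k:ℚ) ≠ 0 := by exact_mod_cast by omega
      have : 1 + (k:ℚ) * (-(3 * (k:ℚ))⁻¹) = 2/3 := by
        field_simp
        ring
      linarith
    linarith
  -- Euler product formula: 3 φ(N) ≥ 2 N
  have heuler := Nat.totient_eq_mul_prod_factors N
  have hNQ : (0:ℚ) ≤ (N:ℚ) := by positivity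
  have h23 : 2 * (N:ℚ) ≤ 3 * (Nat.totient N : ℚ) := by
    rw [heuler]
    nlinarith [hfrac, hNQ]
  have h23' : 2 * N ≤ 3 * Nat.totient N := by exact_mod_cast h23
  -- but φ(N) = pell m ≤ pell (n-1) and N > 2 * pell (n-1)
  have hmle : pell m ≤ pell (n - 1) := pell_mono (by omega)
  have hNrec : N = 2 * pell (n - 1) + pell (n - 2) := by
    have e1 : n - 2 + 2 = n := by omega
    have e2 : n - 2 + 1 = n - 1 := by omega
    have hr : pell (n - 2 + 2) = 2 * pell (n - 2 + 1) + pell (n - 2) := rfl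
    rw [e1, e2] at hr
    exact hr
  have hp2 : 0 < pell (n - 2) := pell_pos _ (by omega)
  omega
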